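/- Let S be an STS(v) with a strict k-bicoloring with color class sizes n₁,…,n_k. Suppose there exist distinct indices i, j with n_i + n_j = (v+1)/2 and (v+1)/2 even. Then there exists an STS(2v+1), obtained from S by a doubling construction, admitting an extended strict k-bicoloring (every triple still receives exactly two colors, and the v+1 new points are colored with the original k colors). -/

import Mathlib

/-!
Attach to each old point `a u` of the STS(v) a 1-factor `F u` of `K_{v+1}` on the new points and
add the blocks `{a u} ∪ e`, `e ∈ F u`; this doubling is an STS(2v+1). Split the new points into two
copies of `ℤ/m` coloured `i` and `j`. The `m` factors `y ↦ y + t` of `K_{m,m}` between the copies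
go to the `n i + n j = m` old points coloured `i` or `j`, and the `m - 1` factors of a
1-factorization of `K_m` (which exists as `m` is even), used inside both copies at once, go to
the remaining old points. A block then sees the two colours `i, j`, or the single colour of one
copy together with a different colour.
-/

open Finset

def isSTS {α : Type*} [DecidableEq α] (V : Finset α) (B : Finset (Finset α)) : Prop :=
  (∀ T ∈ B, T ⊆ V ∧ T.card = 3) ∧
  ∀ p : Finset α, p ⊆ V → p.card = 2 → ∃! T, T ∈ B ∧ p ⊆ T

def isOneFactorization {α : Type*} [DecidableEq α] {v : ℕ}
    (X : Finset α) (F : Fin v → Finset (Finset α)) : Prop :=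
  (∀ i, ∀ e ∈ F i, e ⊆ X ∧ e.card = 2) ∧
  (∀ i, ∀ x ∈ X, ∃! e, e ∈ F i ∧ x ∈ e) ∧
  (∀ e : Finset α, e ⊆ X → e.card = 2 → ∃! i, e ∈ F i)

def doublingBlocks {α : Type*} [DecidableEq α] {v : ℕ}
    (a : Fin v → α) (F : Fin v → Finset (Finset α)) : Finset (Finset α) :=
  Finset.univ.biUnion fun i => (F i).image fun e => insert (a i) e

def isStrictBicoloring {α : Type*} [DecidableEq α] {k : ℕ}
    (V : Finset α) (B : Finset (Finset α)) (φ : α → Fin k) : Prop :=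
  (∀ T ∈ B, (T.image φ).card = 2) ∧ ∀ i : Fin k, ∃ x ∈ V, φ x = i

lemma Finset.pair_eq_pair_iff {β : Type*} [DecidableEq β] {x y z w : β} :
    ({x, y} : Finset β) = {z, w} ↔ x = z ∧ y = w ∨ x = w ∧ y = z := by
  rw [← coe_inj, coe_pair, coe_pair, Set.pair_eq_pair_iff]

/-- A 1-factorization of the complete graph on `P`, given by partner maps: `f u p` is the vertex
matched with `p` in the factor `u`. -/
structure IsPartnerFamily {ι P : Type*} (f : ι → P → P) : Prop where
  involutive : ∀ u, Function.Involutive (f u)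
  ne_self : ∀ u p, f u p ≠ p
  existsUnique : ∀ p q, p ≠ q → ∃! u, f u p = q

namespace IsPartnerFamily

variable {ι κ P Q : Type*} {f : ι → P → P}

lemma comp_equiv (hf : IsPartnerFamily f) (e : κ ≃ ι) : IsPartnerFamily (f ∘ e) where
  involutive k := hf.involutive (e k)
  ne_self k := hf.ne_self (e k)
  existsUnique p q hpq := e.existsUnique_congr_right.mpr (hf.existsUnique p q hpq)

lemma conj (hf : IsPartnerFamily f) (e : P ≃ Q) :
    IsPartnerFamily fun u => e ∘ f u ∘ e.symm where
  involutive u q := by simp only [Function.comp_apply, e.symm_apply_apply, hf.involutive u _,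
    e.apply_symm_apply]
  ne_self u q h := hf.ne_self u (e.symm q) (e.eq_symm_apply.mpr h)
  existsUnique p q hpq := by
    simpa only [Function.comp_apply, ← e.eq_symm_apply] using
      hf.existsUnique (e.symm p) (e.symm q) (e.symm.injective.ne hpq)

end IsPartnerFamily

def partnerPairs {P β : Type*} [Fintype P] [DecidableEq β] (g : P → β) (f : P → P) :
    Finset (Finset β) :=
  univ.image fun p => {g p, g (f p)}

section partnerPairs

variable {P β : Type*} [Fintype P] [DecidableEq β] {g : P → β} {f : P → P}

lemma mem_partnerPairs {e : Finset β} : e ∈ partnerPairs g f ↔ ∃ p, {g p, g (f p)} = e := by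
  simp [partnerPairs]

lemma pair_mem_partnerPairs (hg : Function.Injective g) (hf : Function.Involutive f) {p q : P} :
    {g p, g q} ∈ partnerPairs g f ↔ f p = q := by
  refine ⟨fun h => ?_, fun h => mem_partnerPairs.mpr ⟨p, by rw [h]⟩⟩
  obtain ⟨p', h⟩ := mem_partnerPairs.mp h
  rcases Finset.pair_eq_pair_iff.mp h with ⟨h1, h2⟩ | ⟨h1, h2⟩
  · rw [← hg h1, hg h2]
  · rw [← hg h2, ← hg h1, hf]

lemma IsPartnerFamily.isOneFactorization_image {v : ℕ} {f : Fin v → P → P}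
    (hf : IsPartnerFamily f) (hg : Function.Injective g) :
    isOneFactorization (univ.image g) fun u => partnerPairs g (f u) := by
  refine ⟨fun u e he => ?_, fun u x hx => ?_, fun e he hcard => ?_⟩
  · obtain ⟨p, rfl⟩ := mem_partnerPairs.mp he
    refine ⟨?_, card_pair (hg.ne (hf.ne_self u p).symm)⟩
    simp [insert_subset_iff]
  · obtain ⟨p, -, rfl⟩ := mem_image.mp hx
    refine ⟨{g p, g (f u p)}, ⟨mem_partnerPairs.mpr ⟨p, rfl⟩, mem_insert_self _ _⟩, ?_⟩
    rintro e ⟨he, hpe⟩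
    obtain ⟨q, rfl⟩ := mem_partnerPairs.mp he
    rcases mem_insert.mp hpe with h | h
    · rw [hg h]
    · rw [mem_singleton, hg.eq_iff] at h
      rw [h, hf.involutive u, pair_comm]
  · obtain ⟨x, y, hxy, rfl⟩ := card_eq_two.mp hcard
    obtain ⟨p, -, rfl⟩ := mem_image.mp (he (mem_insert_self _ _))
    obtain ⟨q, -, rfl⟩ := mem_image.mp (he (mem_insert_of_mem (mem_singleton_self _)))
    simpa only [pair_mem_partnerPairs hg (hf.involutive _)] using
      hf.existsUnique p q fun h => hxy (congrArg g h)

end partnerPairs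

lemma ZMod.two_mul_bijective_of_odd (r : ℕ) :
    Function.Bijective fun a : ZMod (2 * r + 1) => 2 * a := by
  refine Finite.injective_iff_bijective.mp ?_
  have h : (r + 1 : ZMod (2 * r + 1)) * 2 = 1 := by
    have := ZMod.natCast_self (2 * r + 1)
    push_cast at this
    linear_combination this
  intro a b hab
  simp only at hab
  linear_combination (r + 1 : ZMod (2 * r + 1)) * hab - (a - b) * h

/-- The classical 1-factorization of `K_{2r+2}` on `{∞} ∪ ℤ/(2r+1)`: in the factor `u`, the
point `∞` is matched with `u` and every other `x` with its reflection `2u - x`. -/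
def roundRobin (r : ℕ) (u : ZMod (2 * r + 1)) :
    Option (ZMod (2 * r + 1)) → Option (ZMod (2 * r + 1))
  | none => some u
  | some x => if x = u then none else some (2 * u - x)

lemma isPartnerFamily_roundRobin (r : ℕ) : IsPartnerFamily (roundRobin r) where
  involutive u p := by
    rcases p with _ | x
    · simp [roundRobin]
    · by_cases hx : x = u
      · simp [roundRobin, hx]
      · have : 2 * u - x ≠ u := fun h => hx (by linear_combination -h)
        simp [roundRobin, hx, this]
  ne_self u p := by
    rcases p with _ | x
    · simp [roundRobin]
    · by_cases hx : x = u
      · simp [roundRobin, hx]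
      · simp only [roundRobin, hx, if_false, ne_eq, Option.some.injEq]
        exact fun h => hx ((ZMod.two_mul_bijective_of_odd r).1 (by linear_combination h)).symm
  existsUnique p q hpq := by
    rcases p with _ | x <;> rcases q with _ | y
    · exact absurd rfl hpq
    · exact ⟨y, rfl, fun u h => Option.some_injective _ h⟩
    · exact ⟨x, by simp [roundRobin], fun u h => by simpa [roundRobin, eq_comm] using h⟩
    · have hxy : x ≠ y := fun h => hpq (congrArg some h)
      have hmid : ∀ u, roundRobin r u (some x) = some y ↔ 2 * u = x + y := by
        intro u
        by_cases hx : x = u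
        · subst hx
          simp only [roundRobin, if_true, reduceCtorEq, false_iff]
          exact fun h => hxy (by linear_combination h)
        · simp only [roundRobin, hx, if_false, Option.some.injEq]
          constructor <;> intro h <;> linear_combination h
      simpa only [hmid] using (ZMod.two_mul_bijective_of_odd r).existsUnique (x + y)

lemma Sum.existsUnique_of_inl {α β : Type*} {p : α ⊕ β → Prop} (hl : ∃! a, p (.inl a))
    (hr : ∀ b, ¬p (.inr b)) : ∃! x, p x := by
  obtain ⟨a, ha, hu⟩ := hl
  refine ⟨.inl a, ha, ?_⟩
  rintro (a' | b) h
  · rw [hu a' h]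
  · exact absurd h (hr b)

lemma Sum.existsUnique_of_inr {α β : Type*} {p : α ⊕ β → Prop} (hl : ∀ a, ¬p (.inl a))
    (hr : ∃! b, p (.inr b)) : ∃! x, p x := by
  obtain ⟨b, hb, hu⟩ := hr
  refine ⟨.inr b, hb, ?_⟩
  rintro (a | b') h
  · exact absurd h (hl a)
  · rw [hu b' h]

section doublePartner

variable {G ι : Type*} [AddCommGroup G]

def crossPartner (t : G) : G ⊕ G → G ⊕ G :=
  Sum.elim (fun y => .inr (y + t)) (fun z => .inl (z - t))

def doublePartner (w : ι → G → G) : G ⊕ ι → G ⊕ G → G ⊕ G :=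
  Sum.elim crossPartner fun u => Sum.map (w u) (w u)

lemma IsPartnerFamily.double {w : ι → G → G} (hw : IsPartnerFamily w) :
    IsPartnerFamily (doublePartner w) where
  involutive := by
    rintro (t | u) (y | z)
    · simp [doublePartner, crossPartner]
    · simp [doublePartner, crossPartner]
    · simp [doublePartner, hw.involutive u y]
    · simp [doublePartner, hw.involutive u z]
  ne_self := by
    rintro (t | u) (y | z)
    · simp [doublePartner, crossPartner]
    · simp [doublePartner, crossPartner]
    · simpa [doublePartner] using hw.ne_self u y
    · simpa [doublePartner] using hw.ne_self u z
  existsUnique := by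
    rintro (y | y) (z | z) hyz
    · refine Sum.existsUnique_of_inr (by simp [doublePartner, crossPartner]) ?_
      simpa [doublePartner] using hw.existsUnique y z (by simpa using hyz)
    · refine Sum.existsUnique_of_inl ?_ (by simp [doublePartner])
      simp only [doublePartner, crossPartner, Sum.elim_inl, Sum.inr.injEq]
      exact ⟨z - y, by abel, fun t h => by rw [← h]; abel⟩
    · refine Sum.existsUnique_of_inl ?_ (by simp [doublePartner])
      simp only [doublePartner, crossPartner, Sum.elim_inl, Sum.elim_inr, Sum.inl.injEq]
      exact ⟨y - z, by abel, fun t h => by rw [← h]; abel⟩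
    · refine Sum.existsUnique_of_inr (by simp [doublePartner, crossPartner]) ?_
      simpa [doublePartner] using hw.existsUnique y z (by simpa using hyz)

end doublePartner

lemma isSTS.image {α β : Type*} [DecidableEq α] [DecidableEq β] {V : Finset α}
    {B : Finset (Finset α)} (hB : isSTS V B) {f : α → β} (hf : Function.Injective f) :
    isSTS (V.image f) (B.image (image f)) := by
  refine ⟨fun T hT => ?_, fun p hp hcard => ?_⟩
  · obtain ⟨T, hTB, rfl⟩ := mem_image.mp hT
    exact ⟨image_subset_image (hB.1 T hTB).1, (card_image_of_injective _ hf).trans (hB.1 T hTB).2⟩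
  · obtain ⟨p, hpV, rfl⟩ := subset_image_iff.mp hp
    rw [card_image_of_injective _ hf] at hcard
    obtain ⟨T, ⟨hTB, hpT⟩, hu⟩ := hB.2 p hpV hcard
    refine ⟨T.image f, ⟨mem_image_of_mem _ hTB, image_subset_image hpT⟩, ?_⟩
    rintro _ ⟨hT', hpT'⟩
    obtain ⟨T', hT'B, rfl⟩ := mem_image.mp hT'
    rw [hu T' ⟨hT'B, (image_subset_image_iff hf).mp hpT'⟩]

section doublingBlocks

variable {β : Type*} [DecidableEq β] {v : ℕ} {V X : Finset β} {B : Finset (Finset β)}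
  {a : Fin v → β} {F : Fin v → Finset (Finset β)}

lemma mem_doublingBlocks {T : Finset β} :
    T ∈ doublingBlocks a F ↔ ∃ u, ∃ e ∈ F u, insert (a u) e = T := by
  simp [doublingBlocks]

lemma eq_of_mem_insert_of_mem_left (hVX : Disjoint V X) (hF : isOneFactorization X F) {u : Fin v}
    {e : Finset β} (he : e ∈ F u) {x : β} (hxV : x ∈ V) (hx : x ∈ insert (a u) e) : x = a u :=
  (mem_insert.mp hx).resolve_right fun hxe => disjoint_left.mp hVX hxV ((hF.1 u e he).1 hxe)

lemma mem_of_mem_insert_of_mem_right (hVX : Disjoint V X) (haV : univ.image a = V) {u : Fin v}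
    {e : Finset β} {y : β} (hyX : y ∈ X) (hy : y ∈ insert (a u) e) : y ∈ e :=
  (mem_insert.mp hy).resolve_left fun h =>
    disjoint_right.mp hVX hyX (h ▸ haV ▸ mem_image_of_mem a (mem_univ u))

lemma existsUnique_block_of_subset_left (hB : isSTS V B) (hVX : Disjoint V X)
    (hF : isOneFactorization X F) {p : Finset β} (hpV : p ⊆ V) (hp : p.card = 2) :
    ∃! T, T ∈ B ∪ doublingBlocks a F ∧ p ⊆ T := by
  obtain ⟨T, ⟨hTB, hpT⟩, hu⟩ := hB.2 p hpV hp
  refine ⟨T, ⟨mem_union_left _ hTB, hpT⟩, ?_⟩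
  rintro T' ⟨hT', hpT'⟩
  rcases mem_union.mp hT' with hT'B | hT'D
  · exact hu T' ⟨hT'B, hpT'⟩
  · obtain ⟨u, e, he, rfl⟩ := mem_doublingBlocks.mp hT'D
    obtain ⟨x, y, hxy, rfl⟩ := card_eq_two.mp hp
    have hxT : x ∈ ({x, y} : Finset β) := mem_insert_self x {y}
    have hyT : y ∈ ({x, y} : Finset β) := mem_insert_of_mem (mem_singleton_self y)
    exact absurd ((eq_of_mem_insert_of_mem_left hVX hF he (hpV hxT) (hpT' hxT)).trans
      (eq_of_mem_insert_of_mem_left hVX hF he (hpV hyT) (hpT' hyT)).symm) hxy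

lemma existsUnique_block_of_mem_left_of_mem_right (hB : isSTS V B) (hVX : Disjoint V X)
    (ha : Function.Injective a) (haV : univ.image a = V) (hF : isOneFactorization X F)
    {x y : β} (hx : x ∈ V) (hy : y ∈ X) :
    ∃! T, T ∈ B ∪ doublingBlocks a F ∧ {x, y} ⊆ T := by
  obtain ⟨u, -, rfl⟩ := mem_image.mp (haV ▸ hx)
  obtain ⟨e, ⟨he, hye⟩, hu⟩ := hF.2.1 u y hy
  refine ⟨insert (a u) e, ⟨mem_union_right _ (mem_doublingBlocks.mpr ⟨u, e, he, rfl⟩), ?_⟩, ?_⟩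
  · exact insert_subset_insert _ (singleton_subset_iff.mpr hye)
  rintro T ⟨hT, hxyT⟩
  rw [insert_subset_iff, singleton_subset_iff] at hxyT
  rcases mem_union.mp hT with hTB | hTD
  · exact absurd ((hB.1 T hTB).1 hxyT.2) (disjoint_right.mp hVX hy)
  · obtain ⟨u', e', he', rfl⟩ := mem_doublingBlocks.mp hTD
    obtain rfl := ha (eq_of_mem_insert_of_mem_left hVX hF he' hx hxyT.1)
    rw [hu e' ⟨he', mem_of_mem_insert_of_mem_right hVX haV hy hxyT.2⟩]

lemma existsUnique_block_of_subset_right (hB : isSTS V B) (hVX : Disjoint V X)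
    (haV : univ.image a = V) (hF : isOneFactorization X F)
    {p : Finset β} (hpX : p ⊆ X) (hp : p.card = 2) :
    ∃! T, T ∈ B ∪ doublingBlocks a F ∧ p ⊆ T := by
  obtain ⟨u, hpu, hu⟩ := hF.2.2 p hpX hp
  refine ⟨insert (a u) p, ⟨mem_union_right _ (mem_doublingBlocks.mpr ⟨u, p, hpu, rfl⟩),
    subset_insert _ _⟩, ?_⟩
  rintro T ⟨hT, hpT⟩
  obtain ⟨x, hxp⟩ := card_pos.mp (hp ▸ two_pos)
  rcases mem_union.mp hT with hTB | hTD
  · exact absurd ((hB.1 T hTB).1 (hpT hxp)) (disjoint_right.mp hVX (hpX hxp))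
  · obtain ⟨u', e', he', rfl⟩ := mem_doublingBlocks.mp hTD
    have hpe' : p ⊆ e' := fun y hy => mem_of_mem_insert_of_mem_right hVX haV (hpX hy) (hpT hy)
    obtain rfl := eq_of_subset_of_card_le hpe' ((hF.1 u' e' he').2.trans hp.symm).le
    rw [hu u' he']

lemma isSTS_union_doublingBlocks (hB : isSTS V B) (hVX : Disjoint V X)
    (ha : Function.Injective a) (haV : univ.image a = V) (hF : isOneFactorization X F) :
    isSTS (V ∪ X) (B ∪ doublingBlocks a F) := by
  refine ⟨fun T hT => ?_, fun p hp hcard => ?_⟩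
  · rcases mem_union.mp hT with hTB | hTD
    · exact ⟨(hB.1 T hTB).1.trans subset_union_left, (hB.1 T hTB).2⟩
    obtain ⟨u, e, he, rfl⟩ := mem_doublingBlocks.mp hTD
    have hau : a u ∈ V := haV ▸ mem_image_of_mem a (mem_univ u)
    refine ⟨insert_subset (mem_union_left _ hau) ((hF.1 u e he).1.trans subset_union_right), ?_⟩
    rw [card_insert_of_notMem fun h => disjoint_left.mp hVX hau ((hF.1 u e he).1 h),
      (hF.1 u e he).2]
  obtain ⟨x, y, hxy, rfl⟩ := card_eq_two.mp hcard
  rw [insert_subset_iff, singleton_subset_iff, mem_union, mem_union] at hp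
  rcases hp with ⟨hx | hx, hy | hy⟩
  · exact existsUnique_block_of_subset_left hB hVX hF (by simp [insert_subset_iff, hx, hy]) hcard
  · exact existsUnique_block_of_mem_left_of_mem_right hB hVX ha haV hF hx hy
  · rw [pair_comm]
    exact existsUnique_block_of_mem_left_of_mem_right hB hVX ha haV hF hy hx
  · exact existsUnique_block_of_subset_right hB hVX haV hF (by simp [insert_subset_iff, hx, hy])
      hcard

end doublingBlocks

lemma isStrictBicoloring.image {α β : Type*} [DecidableEq α] [DecidableEq β] {k : ℕ}
    {V : Finset α} {B : Finset (Finset α)} {φ : α → Fin k} (hφ : isStrictBicoloring V B φ)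
    {f : α → β} {ψ : β → Fin k} (hψ : ψ ∘ f = φ) :
    isStrictBicoloring (V.image f) (B.image (image f)) ψ := by
  refine ⟨fun T hT => ?_, fun c => ?_⟩
  · obtain ⟨T, hTB, rfl⟩ := mem_image.mp hT
    rw [image_image, hψ]
    exact hφ.1 T hTB
  · obtain ⟨x, hx, rfl⟩ := hφ.2 c
    exact ⟨f x, mem_image_of_mem f hx, congrFun hψ x⟩

lemma isStrictBicoloring.union_doublingBlocks {β : Type*} [DecidableEq β] {k v : ℕ}
    {V X : Finset β} {B : Finset (Finset β)} {ψ : β → Fin k} (hψ : isStrictBicoloring V B ψ)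
    {a : Fin v → β} {F : Fin v → Finset (Finset β)}
    (hF : ∀ u, ∀ e ∈ F u, ((insert (a u) e).image ψ).card = 2) :
    isStrictBicoloring (V ∪ X) (B ∪ doublingBlocks a F) ψ := by
  refine ⟨fun T hT => ?_, fun c => ?_⟩
  · rcases mem_union.mp hT with hTB | hTD
    · exact hψ.1 T hTB
    · obtain ⟨u, e, he, rfl⟩ := mem_doublingBlocks.mp hTD
      exact hF u e he
  · obtain ⟨x, hx, hxc⟩ := hψ.2 c
    exact ⟨x, mem_union_left _ hx, hxc⟩

def sideColor {G C : Type*} (i j : C) : G ⊕ G → C :=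
  Sum.elim (fun _ => i) (fun _ => j)

lemma card_image_insert_of_mem_partnerPairs_doublePartner {G ι β : Type*} [AddCommGroup G]
    [Fintype G] [DecidableEq β] {k : ℕ} {i j : Fin k} (hij : i ≠ j) {w : ι → G → G}
    {g : G ⊕ G → β} {ψ : β → Fin k} (hψ : ψ ∘ g = sideColor i j) {idx : G ⊕ ι} {b : β}
    (hb : ψ b = i ∨ ψ b = j ↔ idx.isLeft) {e : Finset β}
    (he : e ∈ partnerPairs g (doublePartner w idx)) :
    ((insert b e).image ψ).card = 2 := by
  obtain ⟨p, rfl⟩ := mem_partnerPairs.mp he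
  simp only [image_insert, image_singleton, ← Function.comp_apply (f := ψ), hψ]
  rcases idx with t | u
  · rcases hb.mpr rfl with hb | hb <;> rcases p with y | y <;>
      simp [doublePartner, crossPartner, sideColor, hb, hij, hij.symm]
  · simp only [Sum.isLeft_inr, Bool.false_eq_true, iff_false, not_or] at hb
    rcases p with y | y <;> simp [doublePartner, sideColor, hb.1, hb.2]

lemma exists_equiv_sum_finset_filter {α κ₁ κ₂ : Type*} [Fintype κ₁] [Fintype κ₂]
    (V : Finset α) (p : α → Prop) [DecidablePred p] (h₁ : Fintype.card κ₁ = (V.filter p).card)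
    (h₂ : Fintype.card κ₂ = (V.filter fun x => ¬p x).card) :
    ∃ τ : κ₁ ⊕ κ₂ ≃ V, ∀ x, p (τ x) ↔ x.isLeft := by
  have hcard (q : α → Prop) [DecidablePred q] :
      Fintype.card {x : V // q x} = (V.filter q).card := by
    rw [Fintype.card_subtype, univ_eq_attach, filter_attach q, card_map, card_attach]
  obtain ⟨e₁⟩ : Nonempty (κ₁ ≃ {x : V // p x}) :=
    ⟨Fintype.equivOfCardEq (h₁.trans (hcard p).symm)⟩
  obtain ⟨e₂⟩ : Nonempty (κ₂ ≃ {x : V // ¬p x}) :=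
    ⟨Fintype.equivOfCardEq (h₂.trans (hcard _).symm)⟩
  refine ⟨(e₁.sumCongr e₂).trans (Equiv.sumCompl fun x : V => p x), ?_⟩
  rintro (t | u)
  · simpa using (e₁ t).2
  · simpa using (e₂ u).2

lemma exists_equiv_sum_colorPair {α κ₁ κ₂ : Type*} [DecidableEq α] [Fintype κ₁] [Fintype κ₂]
    {k : ℕ}
    (V : Finset α) (φ : α → Fin k) {i j : Fin k} (hij : i ≠ j)
    (h₁ : Fintype.card κ₁ = (V.filter fun x => φ x = i).card + (V.filter fun x => φ x = j).card)
    (h₂ : Fintype.card κ₁ + Fintype.card κ₂ = V.card) :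
    ∃ τ : κ₁ ⊕ κ₂ ≃ V, ∀ x, φ (τ x) = i ∨ φ (τ x) = j ↔ x.isLeft := by
  have hij_card : (V.filter fun x => φ x = i ∨ φ x = j).card = Fintype.card κ₁ := by
    rw [filter_or, h₁,
      card_union_of_disjoint (disjoint_filter.mpr fun x _ hi hj => hij (hi.symm.trans hj))]
  have hcompl := card_filter_add_card_filter_not (s := V) fun x => φ x = i ∨ φ x = j
  exact exists_equiv_sum_finset_filter V _ hij_card.symm (by omega)

lemma exists_isPartnerFamily_zmod (r : ℕ) :
    ∃ w : ZMod (2 * r + 1) → ZMod (2 * r + 2) → ZMod (2 * r + 2), IsPartnerFamily w := by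
  obtain ⟨e⟩ : Nonempty (Option (ZMod (2 * r + 1)) ≃ ZMod (2 * r + 2)) :=
    ⟨Fintype.equivOfCardEq (by simp)⟩
  exact ⟨_, (isPartnerFamily_roundRobin r).conj e⟩

lemma image_univ_val_equiv {α κ : Type*} [Fintype κ] [DecidableEq α] {V : Finset α}
    (e : κ ≃ V) : univ.image (fun u => (e u : α)) = V := by
  change univ.image (Subtype.val ∘ e) = V
  rw [← image_image, image_univ_equiv, univ_eq_attach, attach_image_val]

theorem stmt_9 {α : Type*} [DecidableEq α] (v k m : ℕ)
    (V : Finset α) (B : Finset (Finset α)) (hV : V.card = v) (hSTS : isSTS V B)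
    (φ : α → Fin k) (hφ : isStrictBicoloring V B φ)
    (n : Fin k → ℕ) (hn : ∀ i, (V.filter fun x => φ x = i).card = n i)
    (i j : Fin k) (hij : i ≠ j)
    (hm : v + 1 = 2 * m) (hsum : n i + n j = m) (hmeven : Even m) :
    -- a doubled system on `α ⊕ Fin (v+1)`; the new points are the `Sum.inr`s
    ∃ (F : Fin v → Finset (Finset (α ⊕ Fin (v + 1))))
      (a : Fin v → α ⊕ Fin (v + 1)) (ψ : α ⊕ Fin (v + 1) → Fin k),
      Function.Injective a ∧
      V.image Sum.inl = Finset.image a Finset.univ ∧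
      isOneFactorization ((Finset.univ : Finset (Fin (v + 1))).image Sum.inr) F ∧
      isSTS (V.image Sum.inl ∪ (Finset.univ : Finset (Fin (v + 1))).image Sum.inr)
        (B.image (Finset.image Sum.inl) ∪ doublingBlocks a F) ∧
      isStrictBicoloring
        (V.image Sum.inl ∪ (Finset.univ : Finset (Fin (v + 1))).image Sum.inr)
        (B.image (Finset.image Sum.inl) ∪ doublingBlocks a F) ψ ∧
      (∀ x ∈ V, ψ (Sum.inl x) = φ x) := by
  obtain ⟨r, rfl⟩ : ∃ r, m = 2 * r + 2 := by
    obtain ⟨q, rfl⟩ := hmeven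
    exact ⟨q - 1, by omega⟩
  obtain ⟨τ, hτ⟩ := exists_equiv_sum_colorPair (κ₁ := ZMod (2 * r + 2)) (κ₂ := ZMod (2 * r + 1))
    V φ hij (by rw [ZMod.card, hn, hn, hsum]) (by simp only [ZMod.card]; omega)
  obtain ⟨ρ⟩ : Nonempty (Fin v ≃ ZMod (2 * r + 2) ⊕ ZMod (2 * r + 1)) :=
    ⟨Fintype.equivOfCardEq (by simp; omega)⟩
  obtain ⟨π⟩ : Nonempty (ZMod (2 * r + 2) ⊕ ZMod (2 * r + 2) ≃ Fin (v + 1)) :=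
    ⟨Fintype.equivOfCardEq (by simp; omega)⟩
  obtain ⟨w, hw⟩ := exists_isPartnerFamily_zmod r
  have ha : Function.Injective fun u => (.inl (τ (ρ u)) : α ⊕ Fin (v + 1)) :=
    Sum.inl_injective.comp (Subtype.val_injective.comp (τ.injective.comp ρ.injective))
  have haV : univ.image (fun u => (.inl (τ (ρ u)) : α ⊕ Fin (v + 1))) = V.image Sum.inl := by
    have h := congrArg (image (Sum.inl (β := Fin (v + 1)))) (image_univ_val_equiv (ρ.trans τ))
    rwa [image_image] at h
  have hF : isOneFactorization ((univ : Finset (Fin (v + 1))).image Sum.inr)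
      fun u => partnerPairs (Sum.inr (α := α) ∘ π) (doublePartner w (ρ u)) := by
    simpa only [← image_image, image_univ_equiv, Function.comp_apply] using
      (hw.double.comp_equiv ρ).isOneFactorization_image (Sum.inr_injective.comp π.injective)
  have hψ : Sum.elim φ (sideColor i j ∘ π.symm) ∘ (Sum.inr ∘ π) = sideColor i j := by
    ext; simp
  refine ⟨_, _, Sum.elim φ (sideColor i j ∘ π.symm), ha, haV.symm, hF,
    isSTS_union_doublingBlocks (hSTS.image Sum.inl_injective) (by simp [disjoint_left]) ha haV hF,
    (hφ.image (Sum.elim_comp_inl _ _)).union_doublingBlocks fun u e he =>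
      card_image_insert_of_mem_partnerPairs_doublePartner hij hψ (b := .inl (τ (ρ u)))
        (hτ (ρ u)) he,
    fun x _ => rfl⟩
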